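/- Let {P, C} be a PC 1-path-cycle factor of an edge-colored complete graph G, where the PC path P runs from u to u' with first edge at u of color x, and C is a PC cycle (of length at least 3). If there exists a vertex v ∈ V(C) with col(uv) ≠ x, then G contains a PC Hamilton path. -/

import Mathlib

/-- `IsPCPath G col l`: the list of vertices `l` is a properly colored (PC) path in the
edge-colored graph `(G, col)`: it is nonempty, has no repeated vertices, consecutive
vertices are adjacent in `G`, and every two consecutive edges have distinct colors. -/
def IsPCPath {V γ : Type*} (G : SimpleGraph V) (col : V → V → γ) (l : List V) : Prop :=
  l ≠ [] ∧ l.Nodup ∧ l.Chain' G.Adj ∧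
    ∀ a b c : V, [a, b, c] <:+: l → col a b ≠ col b c

/-- `IsPCCycle G col l`: the list of vertices `l` is a properly colored (PC) cycle in the
edge-colored graph `(G, col)`: it has at least 3 distinct vertices, cyclically consecutive
vertices are adjacent in `G`, and every two cyclically consecutive edges (including at the
vertex where the cycle closes) have distinct colors. -/
def IsPCCycle {V γ : Type*} (G : SimpleGraph V) (col : V → V → γ) (l : List V) : Prop :=
  3 ≤ l.length ∧ l.Nodup ∧ (l ++ l.take 2).Chain' G.Adj ∧
    ∀ a b c : V, [a, b, c] <:+: (l ++ l.take 2) → col a b ≠ col b c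

/-- `HasChar col l u x y u'`: the path `l` has character `[u, x, y, u']`, i.e. it starts at
`u` with first edge of color `x` and ends at `u'` with last edge of color `y`. -/
def HasChar {V γ : Type*} (col : V → V → γ) (l : List V) (u : V) (x y : γ) (u' : V) : Prop :=
  (∃ b t, l = u :: b :: t ∧ col u b = x) ∧
  (∃ b t, l.reverse = u' :: b :: t ∧ col u' b = y)

/-- `IsCycleEdge c v v'`: `v` and `v'` are (cyclically) consecutive vertices of the cycle
represented by the list `c`, i.e. `vv'` is an edge of the cycle. -/
def IsCycleEdge {V : Type*} (c : List V) (v v' : V) : Prop :=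
  [v, v'] <:+: (c ++ c.take 1) ∨ [v', v] <:+: (c ++ c.take 1)

/-!
Walk around `C` to `v` and step from `v` to `u`. The two edges of `C` at `v` have different
colours, so `C` can be traversed, in one of its two directions, as a properly coloured path
ending at `v` whose last edge has colour different from `col v u`. Prefixing it to `P` through
the edge `vu` gives a properly coloured Hamilton path: the junction at `u` is proper because
`col u v ≠ x`, the colour of the first edge of `P`.
-/
section

variable {V γ : Type*} {G : SimpleGraph V} {col : V → V → γ}

def IsPCWalk (G : SimpleGraph V) (col : V → V → γ) (l : List V) : Prop :=
  l.IsChain G.Adj ∧ ∀ a b c : V, [a, b, c] <:+: l → col a b ≠ col b c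

theorem isPCCycle_iff {c : List V} :
    IsPCCycle G col c ↔ 3 ≤ c.length ∧ c.Nodup ∧ IsPCWalk G col (c ++ c.take 2) :=
  Iff.rfl

theorem IsPCWalk.infix {l l' : List V} (h : IsPCWalk G col l) (h' : l' <:+: l) :
    IsPCWalk G col l' :=
  ⟨h.1.infix h', fun a b c habc => h.2 a b c (habc.trans h')⟩

theorem IsPCWalk.reverse {l : List V} (hsym : ∀ a b, col a b = col b a) (h : IsPCWalk G col l) :
    IsPCWalk G col l.reverse := by
  refine ⟨List.isChain_reverse.2 (h.1.imp fun _ _ hab => hab.symm), fun a b c habc => ?_⟩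
  rw [hsym a b, hsym b c]
  exact (h.2 c b a (List.reverse_infix.1 (by simpa using habc))).symm

theorem IsPCWalk.append {l₁ l₂ : List V} {a v u : V} (h₁ : IsPCWalk G col (l₁ ++ [a, v]))
    (h₂ : IsPCWalk G col (u :: l₂)) (hadj : G.Adj v u) (hv : col a v ≠ col v u)
    (hu : ∀ b ∈ l₂.head?, col v u ≠ col u b) :
    IsPCWalk G col (l₁ ++ [a, v] ++ u :: l₂) := by
  refine ⟨List.isChain_append.2 ⟨h₁.1, h₂.1, by simpa using hadj⟩, fun x y z hxyz => ?_⟩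
  rcases List.infix_append_iff_ne_nil.1 hxyz with h | h | ⟨p, q, hp, hq, hpq, hps, hqp⟩
  · exact h₁.2 x y z h
  · exact h₂.2 x y z h
  · -- the triple straddles the junction as `[a, v] | [u]` or `[v] | [u, b]`
    rw [← List.reverse_prefix] at hps
    rcases p with _ | ⟨p₁, _ | ⟨p₂, _ | ⟨p₃, p⟩⟩⟩ <;> rcases q with _ | ⟨q₁, _ | ⟨q₂, q⟩⟩ <;>
      simp_all [List.singleton_prefix_iff_head?_eq_some]

theorem IsPCCycle.rotate_one {a : V} {l : List V} (hC : IsPCCycle G col (a :: l)) :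
    IsPCCycle G col (l ++ [a]) := by
  obtain ⟨hlen, hnd, hW⟩ := isPCCycle_iff.1 hC
  obtain ⟨b, d, l, rfl⟩ : ∃ b d l', l = b :: d :: l' := by
    rcases l with _ | ⟨b, _ | ⟨d, l⟩⟩ <;> simp_all
  replace hW : IsPCWalk G col (a :: b :: d :: l ++ [a, b]) := by simpa using hW
  have hbd : G.Adj b d := by simpa using hW.1.tail.rel_head?
  have habd : col a b ≠ col b d := hW.2 a b d ⟨[], l ++ [a, b], by simp⟩
  have hW' : IsPCWalk G col ((a :: b :: d :: l) ++ [a, b] ++ [d]) :=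
    hW.append ⟨by simp, fun _ _ _ h => by simpa using h.length_le⟩ hbd habd (by simp)
  refine isPCCycle_iff.2 ⟨by simp, (List.perm_append_singleton a _).nodup_iff.2 hnd,
    hW'.infix ⟨[a], [], by simp⟩⟩

theorem IsPCCycle.of_isRotated {c c' : List V} (hC : IsPCCycle G col c) (h : c ~r c') :
    IsPCCycle G col c' := by
  obtain ⟨n, rfl⟩ := h
  induction n generalizing c with
  | zero => simpa using hC
  | succ n ih =>
    rcases c with _ | ⟨a, l⟩
    · simpa using hC
    · simpa using ih hC.rotate_one

theorem IsPCCycle.exists_perm_isPCPath_ending_at (hsym : ∀ a b, col a b = col b a)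
    {c : List V} (hC : IsPCCycle G col c) {v : V} (hv : v ∈ c) (κ : γ) :
    ∃ s a, IsPCPath G col (s ++ [a, v]) ∧ (s ++ [a, v]).Perm c ∧ col a v ≠ κ := by
  obtain ⟨l₁, l₂, rfl⟩ := List.append_of_mem hv
  have hrot : l₁ ++ v :: l₂ ~r v :: (l₂ ++ l₁) := by
    rw [← List.cons_append]; exact List.isRotated_append
  obtain ⟨hlen, hnd, hW⟩ := isPCCycle_iff.1 (hC.of_isRotated hrot)
  obtain ⟨w, S, e, hwSe⟩ : ∃ w S e, l₂ ++ l₁ = w :: (S ++ [e]) := by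
    rcases h : l₂ ++ l₁ with _ | ⟨w, T⟩
    · simp [h] at hlen
    rcases T.eq_nil_or_concat' with rfl | ⟨S, e, rfl⟩
    · simp [h] at hlen
    exact ⟨w, S, e, rfl⟩
  rw [hwSe] at hlen hnd hW hrot
  replace hW : IsPCWalk G col (v :: w :: S ++ [e, v, w]) := by simpa using hW
  have hcol : col e v ≠ col v w := hW.2 e v w ⟨v :: w :: S, [], by simp⟩
  have hprefix : IsPCWalk G col (v :: w :: S ++ [e]) := hW.infix ⟨[], [v, w], by simp⟩
  by_cases hev : col e v = κ
  · have hrev : e :: S.reverse ++ [w, v] = (v :: w :: S ++ [e]).reverse := by simp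
    refine ⟨e :: S.reverse, w, ?_, ?_, by rw [hsym, ← hev]; exact hcol.symm⟩ <;> rw [hrev]
    · exact ⟨by simp, List.nodup_reverse.2 hnd, hprefix.reverse hsym⟩
    · exact (List.reverse_perm _).trans hrot.perm.symm
  · have hperm : (w :: S ++ [e, v]).Perm (v :: w :: S ++ [e]) := by
      simpa using List.perm_append_singleton v (w :: S ++ [e])
    refine ⟨w :: S, e, ⟨by simp, hperm.nodup_iff.2 hnd, hW.infix ⟨[v], [w], by simp⟩⟩,
      hperm.trans hrot.perm.symm, hev⟩

theorem IsPCPath.append {l₁ l₂ : List V} {a v u : V} (h₁ : IsPCPath G col (l₁ ++ [a, v]))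
    (h₂ : IsPCPath G col (u :: l₂)) (hdisj : (l₁ ++ [a, v]).Disjoint (u :: l₂))
    (hadj : G.Adj v u) (hv : col a v ≠ col v u) (hu : ∀ b ∈ l₂.head?, col v u ≠ col u b) :
    IsPCPath G col (l₁ ++ [a, v] ++ u :: l₂) :=
  ⟨by simp, h₁.2.1.append h₂.2.1 hdisj, IsPCWalk.append h₁.2.2 h₂.2.2 hadj hv hu⟩

end

theorem stmt8_general {V γ : Type*}
    (col : V → V → γ) (hsym : ∀ u v, col u v = col v u)
    (P c : List V) (u : V) (x : γ)
    (hP : IsPCPath (⊤ : SimpleGraph V) col P)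
    (hC : IsPCCycle (⊤ : SimpleGraph V) col c)
    (hstart : ∃ b t, P = u :: b :: t ∧ col u b = x)
    (hdisj : ∀ w, w ∈ P → w ∉ c)
    (hspan : ∀ w : V, w ∈ P ∨ w ∈ c)
    (hv : ∃ v ∈ c, col u v ≠ x) :
    ∃ Q : List V, IsPCPath (⊤ : SimpleGraph V) col Q ∧ ∀ w : V, w ∈ Q := by
  obtain ⟨v, hvc, hvx⟩ := hv
  obtain ⟨b, t, rfl, rfl⟩ := hstart
  obtain ⟨s, a, hD, hperm, hav⟩ := hC.exists_perm_isPCPath_ending_at hsym hvc (col v u)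
  have hDP : (s ++ [a, v]).Disjoint (u :: b :: t) := fun w hwD hwP =>
    hdisj w hwP (hperm.mem_iff.1 hwD)
  refine ⟨s ++ [a, v] ++ u :: b :: t, hD.append hP hDP ?_ hav ?_, fun w => ?_⟩
  · rintro rfl; exact hDP (by simp) List.mem_cons_self
  · simpa [hsym v u] using hvx
  · rcases hspan w with h | h
    · simp [h]
    · exact List.mem_append_left _ (hperm.mem_iff.2 h)

/-- Let `{P, C}` be a PC 1-path-cycle factor of an edge-colored complete graph, where the
PC path `P` runs from `u` to `u'` with first edge of color `x` and `C` is a PC cycle. If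
some `v ∈ V(C)` satisfies `col(uv) ≠ x`, then there is a PC Hamilton path. -/
theorem stmt8 {V γ : Type*} [Fintype V]
    (col : V → V → γ) (hsym : ∀ u v, col u v = col v u)
    (P c : List V) (u u' : V) (x : γ)
    (hP : IsPCPath (⊤ : SimpleGraph V) col P)
    (hC : IsPCCycle (⊤ : SimpleGraph V) col c)
    (hstart : ∃ b t, P = u :: b :: t ∧ col u b = x)
    (hend : P.getLast? = some u')
    (hdisj : ∀ w, w ∈ P → w ∉ c)
    (hspan : ∀ w : V, w ∈ P ∨ w ∈ c)
    (hv : ∃ v ∈ c, col u v ≠ x) :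
    ∃ Q : List V, IsPCPath (⊤ : SimpleGraph V) col Q ∧ ∀ w : V, w ∈ Q :=
  stmt8_general col hsym P c u x hP hC hstart hdisj hspan hv
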